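/- Let P_j^i[k] be the weighted sum over partitions of length i with first part j containing at least one part of each size j−1,...,j−k, with weight ∏ over critical indices u (λ_u = λ_{u-1}) of (a_{λ_u} + b_{u-1}). Then for k ≥ 0, i > k and j > k+1: P_j^i[k] − P_{j-1}^i[k] = (a_j + 1 − a_{j-k-1}) · P_j^i[k+1]. -/

import Mathlib

/-!
Remove the largest part `j` of a partition. The position of the second part becomes critical
exactly when the second part is again `j`, and the remaining critical positions shift down by
one, which replaces `b` by `m ↦ b (m + 1)`. When `j - 1` is required to occur, the second part
is `j` or `j - 1`, so `P_j^{n+2}[k+1] = (a_j + b_1) P'_j^{n+1}[k+1] + P'_{j-1}^{n+1}[k]`, where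
`P'` is taken with the shifted `b`; without that requirement the second part is any `m ≤ j`.
Substituting these recursions, the identity for length `n + 2` is a linear combination of the
identities for length `n + 1` at `(j, k)` and `(j - 1, k - 1)`. A partition in which
`j, j - 1, …, j - k` occur has at least `k + 1` parts, so all three terms vanish when `i ≤ k`.
-/

open Finset

attribute [local instance] Classical.propDecidable

noncomputable section

/-- Critical positions of a partition (as a function `Fin n → ℕ`): 0-indexed
positions `u ≥ 1` with `lam u = lam (u-1)`. -/
def crit {n : ℕ} (lam : Fin n → ℕ) : Finset (Fin n) :=
  univ.filter fun u => 1 ≤ u.1 ∧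
    lam u = lam ⟨u.1 - 1, Nat.lt_of_le_of_lt (Nat.sub_le u.1 1) u.2⟩

/-- The weight of a partition: the product over critical positions `u` of
`a (λ_u) + b_{u-1}` (paper's 1-indexed convention; here `u` is 0-indexed, so the
factor is `a (lam u) + b u`). -/
def wt {R : Type*} [CommRing R] (a b : ℕ → R) {n : ℕ} (lam : Fin n → ℕ) : R :=
  ∏ u ∈ crit lam, (a (lam u) + b u.1)

/-- The finset of partitions of length `i`, with first part `j`, positive parts, and
at least one part equal to `j - l` for each `l = 1, …, k`. -/
def PartSet (j i k : ℕ) : Finset (Fin i → ℕ) :=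
  (Fintype.piFinset fun _ : Fin i => Finset.Icc 1 j).filter fun lam =>
    (∀ u v : Fin i, u ≤ v → lam v ≤ lam u) ∧
    (∃ h : 0 < i, lam ⟨0, h⟩ = j) ∧
    (∀ l, 1 ≤ l → l ≤ k → ∃ u, lam u = j - l)

/-- `P_j^i[k]`: the weighted sum over `PartSet j i k`. -/
def P {R : Type*} [CommRing R] (a b : ℕ → R) (j i k : ℕ) : R :=
  ∑ lam ∈ PartSet j i k, wt a b lam

section

variable {R : Type*} [CommRing R] (a b : ℕ → R)

lemma mem_PartSet_succ {j n k : ℕ} {lam : Fin (n + 1) → ℕ} :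
    lam ∈ PartSet j (n + 1) k ↔
      Antitone lam ∧ lam 0 = j ∧ (∀ u, 1 ≤ lam u) ∧
        ∀ l, 1 ≤ l → l ≤ k → ∃ u, lam u = j - l := by
  simp only [PartSet, mem_filter, Fintype.mem_piFinset, mem_Icc]
  constructor
  · rintro ⟨hbd, hanti, ⟨_, h0⟩, hk⟩
    exact ⟨hanti, h0, fun u => (hbd u).1, hk⟩
  · rintro ⟨hanti, h0, hpos, hk⟩
    exact ⟨fun u => ⟨hpos u, h0 ▸ hanti (Fin.zero_le u)⟩, hanti, ⟨n.succ_pos, h0⟩, hk⟩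

lemma lt_length_of_mem_PartSet {j i k : ℕ} {lam : Fin i → ℕ} (h : lam ∈ PartSet j i k) :
    k < i := by
  simp only [PartSet, mem_filter, Fintype.mem_piFinset, mem_Icc] at h
  obtain ⟨hbd, -, ⟨hi, h0⟩, hk⟩ := h
  have hsurj : Set.SurjOn (fun u => j - lam u) (univ : Finset (Fin i)) (range (k + 1)) := by
    intro l hl
    simp only [coe_range, Set.mem_Iio] at hl
    rcases Nat.eq_zero_or_pos l with rfl | hl0
    · exact ⟨⟨0, hi⟩, by simp, by simp [h0]⟩
    · obtain ⟨u, hu⟩ := hk l hl0 (by omega)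
      have := (hbd u).1
      exact ⟨u, by simp, by simp only; omega⟩
  simpa using card_le_card_of_surjOn _ hsurj

lemma P_eq_zero_of_length_le {j i k : ℕ} (h : i ≤ k) : P a b j i k = 0 :=
  sum_eq_zero fun _ hlam => absurd (lt_length_of_mem_PartSet hlam) (not_lt.2 h)

lemma P_length_one_zero {j : ℕ} (hj : 0 < j) : P a b j 1 0 = 1 := by
  have hsingle : PartSet j 1 0 = {fun _ => j} := by
    ext lam
    rw [mem_PartSet_succ, mem_singleton]
    constructor
    · rintro ⟨-, h0, -⟩
      funext u
      rwa [Subsingleton.elim u 0]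
    · rintro rfl
      exact ⟨antitone_const, rfl, fun _ => hj, fun l hl hl0 => absurd hl0 (by omega)⟩
  simp [P, hsingle, wt, crit]

lemma wt_cons {n : ℕ} (x : ℕ) (f : Fin (n + 1) → ℕ) :
    wt a b (Fin.cons x f : Fin (n + 2) → ℕ) =
      (if f 0 = x then a x + b 1 else 1) * wt a (fun m => b (m + 1)) f := by
  have hcons : ∀ (m : ℕ) (h : m + 1 < n + 2),
      (Fin.cons x f : Fin (n + 2) → ℕ) ⟨m + 1, h⟩ = f ⟨m, by omega⟩ :=
    fun m _ => Fin.cons_succ (α := fun _ => ℕ) x f ⟨m, by omega⟩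
  rw [wt, wt, crit, crit, prod_filter, prod_filter, Fin.prod_univ_succ, Fin.prod_univ_succ,
    Fin.prod_univ_succ]
  simp only [Fin.val_zero, Fin.val_succ, Fin.cons_zero, Fin.cons_succ, Nat.add_sub_cancel, hcons]
  by_cases hfx : f 0 = x <;> simp [hfx]

lemma cons_mem_PartSet_iff {n j k : ℕ} {f : Fin (n + 1) → ℕ} :
    (Fin.cons j f : Fin (n + 2) → ℕ) ∈ PartSet j (n + 2) k ↔
      Antitone f ∧ f 0 ≤ j ∧ (∀ u, 1 ≤ f u) ∧
        ∀ l, 1 ≤ l → l ≤ k → ∃ u, f u = j - l := by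
  have hanti : Antitone (Fin.cons j f : Fin (n + 2) → ℕ) ↔ f 0 ≤ j ∧ Antitone f :=
    antitone_vecCons
  have hpos :
      (∀ u, 1 ≤ (Fin.cons j f : Fin (n + 2) → ℕ) u) ↔ 1 ≤ j ∧ ∀ u, 1 ≤ f u := by
    simp [Fin.forall_fin_succ]
  have hocc : ∀ l, (∃ u, (Fin.cons j f : Fin (n + 2) → ℕ) u = j - l) ↔
      j = j - l ∨ ∃ u, f u = j - l := by
    simp [Fin.exists_fin_succ]
  rw [mem_PartSet_succ, hanti, hpos]
  simp only [hocc]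
  constructor
  · rintro ⟨⟨h0, hf⟩, -, ⟨hj, hpos⟩, hk⟩
    exact ⟨hf, h0, hpos, fun l hl hlk => (hk l hl hlk).resolve_left (by omega)⟩
  · rintro ⟨hf, h0, hpos, hk⟩
    have := hpos 0
    exact ⟨⟨h0, hf⟩, rfl, ⟨by omega, hpos⟩, fun l hl hlk => .inr (hk l hl hlk)⟩

lemma P_eq_sum_tails {n j k : ℕ} (T : Finset (Fin (n + 1) → ℕ))
    (hT : ∀ f, f ∈ T ↔ (Fin.cons j f : Fin (n + 2) → ℕ) ∈ PartSet j (n + 2) k) :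
    P a b j (n + 2) k =
      ∑ f ∈ T, (if f 0 = j then a j + b 1 else 1) * wt a (fun m => b (m + 1)) f := by
  let consEmb : (Fin (n + 1) → ℕ) ↪ (Fin (n + 2) → ℕ) :=
    ⟨fun f => Fin.cons j f, Fin.cons_right_injective (α := fun _ => ℕ) j⟩
  have hmap : PartSet j (n + 2) k = T.map consEmb := by
    ext lam
    rw [mem_map]
    constructor
    · intro hlam
      have hcons : Fin.cons j (Fin.tail lam) = lam :=
        (mem_PartSet_succ.1 hlam).2.1 ▸ Fin.cons_self_tail lam
      exact ⟨Fin.tail lam, (hT _).2 (hcons ▸ hlam), hcons⟩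
    · rintro ⟨f, hf, rfl⟩
      exact (hT f).1 hf
  rw [P, hmap, sum_map]
  exact sum_congr rfl fun f _ => wt_cons a b j f

lemma PartSet_disjoint {n m m' k k' : ℕ} (h : m ≠ m') :
    Disjoint (PartSet m (n + 1) k) (PartSet m' (n + 1) k') :=
  disjoint_left.2 fun _ h₁ h₂ =>
    h ((mem_PartSet_succ.1 h₁).2.1.symm.trans (mem_PartSet_succ.1 h₂).2.1)

lemma sum_PartSet_ite_mul_wt {n m j k : ℕ} (c : R) :
    ∑ f ∈ PartSet m (n + 1) k, (if f 0 = j then c else 1) * wt a b f =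
      (if m = j then c else 1) * P a b m (n + 1) k := by
  rw [P, mul_sum]
  exact sum_congr rfl fun f hf => by rw [(mem_PartSet_succ.1 hf).2.1]

lemma P_length_add_two {n j k : ℕ} (hj : 0 < j) :
    P a b j (n + 2) (k + 1) =
      (a j + b 1) * P a (fun m => b (m + 1)) j (n + 1) (k + 1) +
        P a (fun m => b (m + 1)) (j - 1) (n + 1) k := by
  have hT : ∀ f, f ∈ PartSet j (n + 1) (k + 1) ∪ PartSet (j - 1) (n + 1) k ↔
      (Fin.cons j f : Fin (n + 2) → ℕ) ∈ PartSet j (n + 2) (k + 1) := by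
    intro f
    rw [mem_union, mem_PartSet_succ, mem_PartSet_succ, cons_mem_PartSet_iff]
    constructor
    · rintro (⟨hf, h0, hpos, hk⟩ | ⟨hf, h0, hpos, hk⟩)
      · exact ⟨hf, h0.le, hpos, hk⟩
      · refine ⟨hf, by omega, hpos, fun l hl hlk => ?_⟩
        rcases hl.eq_or_lt with rfl | hl
        · exact ⟨0, by omega⟩
        · obtain ⟨u, hu⟩ := hk (l - 1) (by omega) (by omega)
          exact ⟨u, by omega⟩
    · rintro ⟨hf, h0, hpos, hk⟩
      obtain ⟨u, hu⟩ := hk 1 le_rfl (by omega)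
      have := hf (Fin.zero_le u)
      rcases (show f 0 = j ∨ f 0 = j - 1 by omega) with h0 | h0
      · exact .inl ⟨hf, h0, hpos, hk⟩
      · refine .inr ⟨hf, h0, hpos, fun l hl hlk => ?_⟩
        obtain ⟨v, hv⟩ := hk (l + 1) (by omega) (by omega)
        exact ⟨v, by omega⟩
  rw [P_eq_sum_tails a b _ hT, sum_union (PartSet_disjoint (by omega)),
    sum_PartSet_ite_mul_wt, sum_PartSet_ite_mul_wt, if_pos rfl, if_neg (by omega), one_mul]

lemma P_length_add_two_zero {n j : ℕ} (hj : 0 < j) :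
    P a b j (n + 2) 0 =
      (a j + b 1) * P a (fun m => b (m + 1)) j (n + 1) 0 +
        ∑ m ∈ Ico 1 j, P a (fun m => b (m + 1)) m (n + 1) 0 := by
  have hT : ∀ f, f ∈ (Icc 1 j).biUnion (fun m => PartSet m (n + 1) 0) ↔
      (Fin.cons j f : Fin (n + 2) → ℕ) ∈ PartSet j (n + 2) 0 := by
    intro f
    rw [cons_mem_PartSet_iff]
    simp only [mem_biUnion, mem_Icc, mem_PartSet_succ]
    constructor
    · rintro ⟨m, ⟨-, hm⟩, hf, rfl, hpos, -⟩
      exact ⟨hf, hm, hpos, fun l hl hl0 => absurd hl0 (by omega)⟩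
    · rintro ⟨hf, h0, hpos, -⟩
      exact ⟨f 0, ⟨hpos 0, h0⟩, hf, rfl, hpos, fun l hl hl0 => absurd hl0 (by omega)⟩
  have hdisj : (Icc 1 j : Set ℕ).PairwiseDisjoint (fun m => PartSet m (n + 1) 0) :=
    fun _ _ _ _ h => PartSet_disjoint h
  rw [P_eq_sum_tails a b _ hT, sum_biUnion hdisj, ← Ico_insert_right hj, sum_insert (by simp),
    sum_PartSet_ite_mul_wt, if_pos rfl]
  congr 1
  refine sum_congr rfl fun m hm => ?_
  rw [sum_PartSet_ite_mul_wt, if_neg (mem_Ico.1 hm).2.ne, one_mul]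

end

theorem statement5_general {R : Type*} [CommRing R] (a b : ℕ → R) (j i k : ℕ)
    (hj : k + 1 < j) :
    P a b j i k - P a b (j - 1) i k =
      (a j + 1 - a (j - k - 1)) * P a b j i (k + 1) := by
  induction i generalizing b j k with
  | zero => simp only [P_eq_zero_of_length_le a b (Nat.zero_le _), sub_self, mul_zero]
  | succ i ih =>
    rcases i with _ | n
    · rcases k with _ | k
      · rw [P_length_one_zero a b (by omega), P_length_one_zero a b (by omega),
          P_eq_zero_of_length_le a b le_rfl, sub_self, mul_zero]
      · simp only [P_eq_zero_of_length_le a b (by omega : 1 ≤ k + 1),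
          P_eq_zero_of_length_le a b (by omega : 1 ≤ k + 1 + 1), sub_self, mul_zero]
    set b' : ℕ → R := fun m => b (m + 1)
    rcases k with _ | k
    · have hsplit : ∑ m ∈ Ico 1 j, P a b' m (n + 1) 0 =
          ∑ m ∈ Ico 1 (j - 1), P a b' m (n + 1) 0 + P a b' (j - 1) (n + 1) 0 := by
        rw [← sum_Ico_succ_top (by omega), Nat.sub_add_cancel (by omega)]
      rw [P_length_add_two_zero a b (by omega), P_length_add_two_zero a b (by omega),
        P_length_add_two a b (by omega), hsplit]
      linear_combination (a j + b 1) * ih b' j 0 hj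
    · have ih₂ := ih b' (j - 1) k (by omega)
      rw [show j - 1 - k - 1 = j - (k + 1) - 1 by omega] at ih₂
      rw [P_length_add_two a b (by omega), P_length_add_two a b (by omega),
        P_length_add_two a b (by omega)]
      linear_combination (a j + b 1) * ih b' j (k + 1) hj + ih₂

/-- The difference identity:
`P_j^i[k] − P_{j-1}^i[k] = (a_j + 1 − a_{j-k-1}) · P_j^i[k+1]`
for `k ≥ 0`, `i > k`, `j > k + 1`. -/
theorem statement5 {R : Type*} [CommRing R] (a b : ℕ → R) (j i k : ℕ)
    (hi : k < i) (hj : k + 1 < j) :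
    P a b j i k - P a b (j - 1) i k =
      (a j + 1 - a (j - k - 1)) * P a b j i (k + 1) :=
  statement5_general a b j i k hj

end
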